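/- Let $(a_1,\dots,a_m)$ be a telescopic sequence with gap sequence $w_1<\cdots<w_g$ (the elements of $\mathbb{Z}_{\ge0}\setminus\langle a_1,\dots,a_m\rangle$), where $g$ is the number of gaps. Then $w_g=2g-1$; i.e., the largest gap (Frobenius number) of the numerical semigroup generated by a telescopic sequence equals $2g-1$ where $g$ is the genus. -/

import Mathlib

/-!
Let `d = gcd(a₁, …, aₘ₋₁)` and `S' = ⟨a₁ / d, …, aₘ₋₁ / d⟩`. The telescopic condition says
`aₘ ∈ S'`, and `gcd(d, aₘ) = 1`, so every integer is `d y + r aₘ` with `0 ≤ r < d`, and it lies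
in `S = ⟨a₁, …, aₘ⟩` iff `y ∈ S'`. By induction on `m`, starting from `⟨1⟩ = ℕ`, some integer `F`
satisfies `x ∈ S ↔ F - x ∉ S` for all `x ∈ ℤ`. Then `n ↦ F - n` exchanges the gaps and the
elements of `S` in `[0, F]`, so `F + 1 = 2g` and `F` is the largest gap.
-/

/-- `dseq a i = gcd(a 1, …, a i)`. -/
def dseq (a : ℕ → ℕ) (i : ℕ) : ℕ := Finset.gcd (Finset.Icc 1 i) a

/-- membership in the numerical semigroup generated by `a 1, …, a m`. -/
def InSemigroup (m : ℕ) (a : ℕ → ℕ) (x : ℕ) : Prop :=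
  ∃ c : ℕ → ℕ, x = ∑ i ∈ Finset.Icc 1 m, c i * a i

/-- `(a 1, …, a m)` is a telescopic sequence. -/
def Telescopic (m : ℕ) (a : ℕ → ℕ) : Prop :=
  2 ≤ m ∧ (∀ i, 1 ≤ i → i ≤ m → 0 < a i) ∧ dseq a m = 1 ∧
  ∀ i, 2 ≤ i → i ≤ m → ∃ c : ℕ → ℕ,
    a i / dseq a i = ∑ j ∈ Finset.Icc 1 (i - 1), c j * (a j / dseq a (i - 1))

/-- membership in the restricted exponent set `B(A_m)`. -/
def InB (m : ℕ) (a : ℕ → ℕ) (k : ℕ → ℕ) : Prop :=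
  (∀ j, (j = 0 ∨ m < j) → k j = 0) ∧
  ∀ i, 2 ≤ i → i ≤ m → k i ≤ dseq a (i - 1) / dseq a i - 1

open Finset

section dseq

variable (a : ℕ → ℕ)

lemma dseq_one : dseq a 1 = a 1 := by simp [dseq]

lemma dseq_succ {i : ℕ} (hi : 1 ≤ i) : dseq a (i + 1) = Nat.gcd (dseq a i) (a (i + 1)) := by
  rw [dseq, ← insert_Icc_right_eq_Icc_add_one (by omega), gcd_insert, Nat.gcd_comm]
  rfl

lemma dseq_dvd {i j : ℕ} (h1 : 1 ≤ j) (h2 : j ≤ i) : dseq a i ∣ a j :=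
  gcd_dvd (mem_Icc.mpr ⟨h1, h2⟩)

lemma dseq_dvd_dseq {i j : ℕ} (h : j ≤ i) : dseq a i ∣ dseq a j :=
  dvd_gcd fun _ hk => dseq_dvd a (mem_Icc.mp hk).1 ((mem_Icc.mp hk).2.trans h)

lemma dseq_pos {i : ℕ} (hi : 1 ≤ i) (ha : 0 < a 1) : 0 < dseq a i :=
  Nat.pos_of_dvd_of_pos (dseq_dvd a le_rfl hi) ha

lemma dseq_div {d i : ℕ} (hdvd : ∀ j, 1 ≤ j → j ≤ i → d ∣ a j) :
    dseq (fun j => a j / d) i = dseq a i / d := by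
  rcases Nat.eq_zero_or_pos d with rfl | hd
  · simp [dseq, Finset.gcd_eq_zero_iff]
  have h : dseq a i = d * dseq (fun j => a j / d) i := by
    have hmul := Finset.gcd_mul_left (s := Icc 1 i) (f := fun j => a j / d) (a := d)
    rw [normalize_eq] at hmul
    rw [dseq, dseq, ← hmul]
    refine gcd_congr rfl fun j hj => ?_
    exact (Nat.mul_div_cancel' (hdvd j (mem_Icc.mp hj).1 (mem_Icc.mp hj).2)).symm
  rw [h, Nat.mul_div_cancel_left _ hd]

lemma dseq_mul_div_cancel {i j : ℕ} (h1 : 1 ≤ j) (h2 : j ≤ i) :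
    dseq a i * (a j / dseq a i) = a j :=
  Nat.mul_div_cancel' (dseq_dvd a h1 h2)

end dseq

section InSemigroup

variable {m : ℕ} {a : ℕ → ℕ}

lemma inSemigroup_zero : InSemigroup m a 0 := ⟨fun _ => 0, by simp⟩

lemma InSemigroup.add {x y : ℕ} (hx : InSemigroup m a x) (hy : InSemigroup m a y) :
    InSemigroup m a (x + y) := by
  obtain ⟨c, rfl⟩ := hx
  obtain ⟨c', rfl⟩ := hy
  exact ⟨c + c', by simp only [Pi.add_apply, add_mul, sum_add_distrib]⟩

lemma InSemigroup.mul_left {x : ℕ} (t : ℕ) (hx : InSemigroup m a x) :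
    InSemigroup m a (t * x) := by
  obtain ⟨c, rfl⟩ := hx
  exact ⟨fun i => t * c i, by simp only [mul_sum, mul_assoc]⟩

lemma inSemigroup_succ_iff {n : ℕ} :
    InSemigroup (m + 1) a n ↔ ∃ n' t, InSemigroup m a n' ∧ n = n' + t * a (m + 1) := by
  constructor
  · rintro ⟨c, rfl⟩
    exact ⟨_, c (m + 1), ⟨c, rfl⟩, sum_Icc_succ_top (by omega) _⟩
  · rintro ⟨_, t, ⟨c, rfl⟩, rfl⟩
    refine ⟨Function.update c (m + 1) t, ?_⟩
    rw [sum_Icc_succ_top (by omega), Function.update_self]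
    congr 1
    refine sum_congr rfl fun j hj => ?_
    rw [Function.update_of_ne (by grind)]

lemma inSemigroup_iff_of_eq_mul {b : ℕ → ℕ} {d : ℕ} (hab : ∀ j, 1 ≤ j → j ≤ m → a j = d * b j)
    {n : ℕ} : InSemigroup m a n ↔ ∃ n', InSemigroup m b n' ∧ n = d * n' := by
  have hsum : ∀ c : ℕ → ℕ, ∑ i ∈ Icc 1 m, c i * a i = d * ∑ i ∈ Icc 1 m, c i * b i := by
    intro c
    rw [mul_sum]
    refine sum_congr rfl fun j hj => ?_
    rw [hab j (mem_Icc.mp hj).1 (mem_Icc.mp hj).2]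
    ring
  constructor
  · rintro ⟨c, rfl⟩
    exact ⟨_, ⟨c, rfl⟩, hsum c⟩
  · rintro ⟨_, ⟨c, rfl⟩, rfl⟩
    exact ⟨c, (hsum c).symm⟩

end InSemigroup

def InSemigroupInt (m : ℕ) (a : ℕ → ℕ) (x : ℤ) : Prop :=
  ∃ n : ℕ, (n : ℤ) = x ∧ InSemigroup m a n

section InSemigroupInt

variable {m : ℕ} {a : ℕ → ℕ}

@[simp]
lemma inSemigroupInt_natCast {n : ℕ} : InSemigroupInt m a n ↔ InSemigroup m a n := by
  simp [InSemigroupInt]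

lemma InSemigroupInt.nonneg {x : ℤ} (hx : InSemigroupInt m a x) : 0 ≤ x := by
  obtain ⟨n, rfl, -⟩ := hx
  positivity

lemma inSemigroupInt_one_iff (ha : a 1 = 1) {x : ℤ} : InSemigroupInt 1 a x ↔ 0 ≤ x := by
  refine ⟨InSemigroupInt.nonneg, fun hx => ⟨x.toNat, Int.toNat_of_nonneg hx, fun _ => x.toNat, ?_⟩⟩
  simp [ha]

lemma inSemigroupInt_succ_iff_of_glue {b : ℕ → ℕ} {d : ℕ}
    (hab : ∀ j, 1 ≤ j → j ≤ m → a j = d * b j) (hcop : Nat.Coprime d (a (m + 1)))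
    (hlast : InSemigroup m b (a (m + 1))) {r : ℕ} (hr : r < d) (y : ℤ) :
    InSemigroupInt (m + 1) a (d * y + r * a (m + 1)) ↔ InSemigroupInt m b y := by
  constructor
  · rintro ⟨n, hn, hmem⟩
    obtain ⟨_, t, hmem', rfl⟩ := inSemigroup_succ_iff.mp hmem
    obtain ⟨n', hn', rfl⟩ := (inSemigroup_iff_of_eq_mul hab).mp hmem'
    push_cast at hn
    have hdvd : (d : ℤ) ∣ (a (m + 1) : ℤ) * ((t : ℤ) - r) :=
      ⟨y - n', by linear_combination hn⟩
    obtain ⟨s, hs⟩ := hcop.isCoprime.dvd_of_dvd_mul_left hdvd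
    have hs0 : 0 ≤ s := by nlinarith
    have hd : (0 : ℤ) < d := by omega
    have hy : y = n' + s * a (m + 1) := by
      apply mul_left_cancel₀ hd.ne'
      linear_combination -hn + (a (m + 1) : ℤ) * hs
    refine ⟨n' + s.toNat * a (m + 1), by rw [hy]; push_cast [Int.toNat_of_nonneg hs0]; ring, ?_⟩
    exact hn'.add (hlast.mul_left _)
  · rintro ⟨n', rfl, hmem⟩
    refine ⟨d * n' + r * a (m + 1), by push_cast; ring, inSemigroup_succ_iff.mpr ?_⟩
    exact ⟨d * n', r, (inSemigroup_iff_of_eq_mul hab).mpr ⟨n', hmem, rfl⟩, rfl⟩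

end InSemigroupInt

lemma exists_eq_mul_add_mul_of_coprime {d e : ℕ} (hd : 0 < d) (hcop : Nat.Coprime d e) (x : ℤ) :
    ∃ r < d, ∃ y : ℤ, x = d * y + r * e := by
  obtain ⟨u, v, huv⟩ := hcop.isCoprime
  have hd' : (0 : ℤ) < d := by exact_mod_cast hd
  have hr0 : 0 ≤ x * v % d := Int.emod_nonneg _ hd'.ne'
  refine ⟨(x * v % d).toNat, by have := Int.emod_lt_of_pos (x * v) hd'; omega,
    x * u + x * v / d * e, ?_⟩
  rw [Int.toNat_of_nonneg hr0]
  linear_combination (-x) * huv - (e : ℤ) * Int.mul_ediv_add_emod (x * v) d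

/-- `Telescopic` without the condition `2 ≤ m`, so that `m = 1` (where `a 1 = 1`) can serve as
the base case of the induction on `m`. -/
def IsTelescopic (m : ℕ) (a : ℕ → ℕ) : Prop :=
  (∀ i, 1 ≤ i → i ≤ m → 0 < a i) ∧ dseq a m = 1 ∧
  ∀ i, 2 ≤ i → i ≤ m → ∃ c : ℕ → ℕ,
    a i / dseq a i = ∑ j ∈ Finset.Icc 1 (i - 1), c j * (a j / dseq a (i - 1))

namespace IsTelescopic

variable {m : ℕ} {a : ℕ → ℕ}

lemma coprime (hm : 1 ≤ m) (h : IsTelescopic (m + 1) a) : Nat.Coprime (dseq a m) (a (m + 1)) := by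
  rw [Nat.Coprime, ← dseq_succ a hm]
  exact h.2.1

lemma inSemigroup_last (hm : 1 ≤ m) (h : IsTelescopic (m + 1) a) :
    InSemigroup m (fun j => a j / dseq a m) (a (m + 1)) := by
  obtain ⟨c, hc⟩ := h.2.2 (m + 1) (by omega) le_rfl
  rw [h.2.1, Nat.div_one, Nat.add_sub_cancel] at hc
  exact ⟨c, hc⟩

lemma div_dseq (hm : 1 ≤ m) (h : IsTelescopic (m + 1) a) :
    IsTelescopic m (fun j => a j / dseq a m) := by
  obtain ⟨hpos, -, htel⟩ := h
  have hd : 0 < dseq a m := dseq_pos a hm (hpos 1 le_rfl (by omega))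
  have hdiv : ∀ i ≤ m, dseq (fun j => a j / dseq a m) i = dseq a i / dseq a m := fun i hi =>
    dseq_div a fun j h1 h2 => dseq_dvd a h1 (h2.trans hi)
  have hcancel : ∀ {i x}, i ≤ m → dseq a i ∣ x →
      x / dseq a m / (dseq a i / dseq a m) = x / dseq a i :=
    fun hi hx => by rw [Nat.div_div_eq_div_mul, Nat.mul_div_cancel' (dseq_dvd_dseq a hi)]
  refine ⟨fun i h1 h2 => Nat.div_pos (Nat.le_of_dvd (hpos i h1 (by omega)) (dseq_dvd a h1 h2)) hd,
    by rw [hdiv m le_rfl, Nat.div_self hd], fun i h2 hi => ?_⟩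
  obtain ⟨c, hc⟩ := htel i h2 (by omega)
  refine ⟨c, ?_⟩
  rw [hdiv i hi, hdiv (i - 1) (by omega), hcancel hi (dseq_dvd a (by omega) le_rfl), hc]
  refine sum_congr rfl fun j hj => ?_
  rw [hcancel (by omega) (dseq_dvd a (mem_Icc.mp hj).1 (mem_Icc.mp hj).2)]

lemma exists_symmetric (hm : 1 ≤ m) (h : IsTelescopic m a) :
    ∃ F : ℤ, ∀ x : ℤ, InSemigroupInt m a x ↔ ¬ InSemigroupInt m a (F - x) := by
  induction m, hm using Nat.le_induction generalizing a with
  | base =>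
    have ha : a 1 = 1 := by rw [← dseq_one a]; exact h.2.1
    refine ⟨-1, fun x => ?_⟩
    rw [inSemigroupInt_one_iff ha, inSemigroupInt_one_iff ha]
    omega
  | succ m hm ih =>
    set d := dseq a m
    obtain ⟨F', hF'⟩ := ih (h.div_dseq hm)
    have hglue : ∀ r < d, ∀ y : ℤ, InSemigroupInt (m + 1) a (d * y + r * a (m + 1)) ↔
        InSemigroupInt m (fun j => a j / d) y := fun r hr =>
      inSemigroupInt_succ_iff_of_glue (fun j h1 h2 => (dseq_mul_div_cancel a h1 h2).symm)
        (h.coprime hm) (h.inSemigroup_last hm) hr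
    have hd : 0 < d := dseq_pos a hm (h.1 1 le_rfl (by omega))
    -- `x ↦ F - x` sends the coordinates `(y, r)` of `x` to `(F' - y, d - 1 - r)`.
    refine ⟨d * F' + (d - 1 : ℕ) * a (m + 1), fun x => ?_⟩
    obtain ⟨r, hr, y, rfl⟩ := exists_eq_mul_add_mul_of_coprime hd (h.coprime hm) x
    have hx' : d * F' + (d - 1 : ℕ) * a (m + 1) - (d * y + r * a (m + 1))
        = d * (F' - y) + (d - 1 - r : ℕ) * a (m + 1) := by
      push_cast [Nat.cast_sub (by omega : 1 ≤ d), Nat.cast_sub (by omega : r ≤ d - 1)]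
      ring
    rw [hx', hglue r hr, hglue _ (by omega), hF']

end IsTelescopic

lemma two_mul_ncard_of_forall_mem_iff {G : Set ℕ} {N : ℕ}
    (h : ∀ n, n ∈ G ↔ n ≤ N ∧ N - n ∉ G) : 2 * G.ncard = N + 1 := by
  classical
  set s := (range (N + 1)).filter (· ∈ G)
  have hG : G = s := by
    ext n
    simp only [s, coe_filter, mem_range, Set.mem_ofPred_eq]
    exact ⟨fun hn => ⟨by have := (h n).1 hn; omega, hn⟩, And.right⟩
  have hreflect : #s = #((range (N + 1)).filter (· ∉ G)) := by
    refine card_nbij' (N - ·) (N - ·) ?_ ?_ ?_ ?_ <;> intro n hn <;>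
      simp only [s, coe_filter, mem_range, Set.mem_ofPred_eq] at hn ⊢
    · exact ⟨by omega, ((h n).1 hn.2).2⟩
    · exact ⟨by omega, (h _).2 ⟨by omega, by rw [Nat.sub_sub_self (by omega)]; exact hn.2⟩⟩
    all_goals omega
  rw [hG, Set.ncard_coe_finset, two_mul]
  nth_rw 2 [hreflect]
  rw [card_filter_add_card_filter_not, card_range]

/-- The largest gap of a telescopic numerical semigroup is 2g - 1. -/
theorem stmt3 (m : ℕ) (a : ℕ → ℕ) (h : Telescopic m a)
    (g : ℕ) (hg : g = {n : ℕ | ¬ InSemigroup m a n}.ncard) (hg1 : 1 ≤ g) :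
    (2 * g - 1) ∈ {n : ℕ | ¬ InSemigroup m a n} ∧
      ∀ n ∈ {n : ℕ | ¬ InSemigroup m a n}, n ≤ 2 * g - 1 := by
  obtain ⟨F, hF⟩ := IsTelescopic.exists_symmetric (Nat.one_le_of_lt h.1) h.2
  set G := {n : ℕ | ¬ InSemigroup m a n}
  have hgap : ∀ n : ℕ, n ∈ G ↔ InSemigroupInt m a (F - n) := fun n => by
    rw [Set.mem_ofPred_eq, ← inSemigroupInt_natCast, hF, not_not]
  obtain ⟨w, hw⟩ : G.Nonempty := Set.nonempty_of_ncard_ne_zero (by omega)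
  obtain ⟨N, rfl⟩ : ∃ N : ℕ, F = N :=
    Int.eq_ofNat_of_zero_le (by linarith [((hgap w).1 hw).nonneg])
  have hG : ∀ n, n ∈ G ↔ n ≤ N ∧ N - n ∉ G := fun n => by
    rw [hgap]
    by_cases hn : n ≤ N
    · rw [← Nat.cast_sub hn, inSemigroupInt_natCast]
      simp [G, hn]
    · exact iff_of_false (fun hmem => hn (by linarith [hmem.nonneg])) (by tauto)
  have hN : 2 * g - 1 = N := by rw [hg, two_mul_ncard_of_forall_mem_iff hG]; rfl
  rw [hN]
  exact ⟨(hG N).2 ⟨le_rfl, by simpa [G] using inSemigroup_zero⟩, fun n hn => ((hG n).1 hn).1⟩
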